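/- arXiv:1702.00608 — 5 statements merged into one kernel-verified Lean document; each statement's English description precedes it below -/
import Mathlib

section
/- Let K be a number field of degree n, let p be a rational prime, and let 𝔭 be a nonzero prime ideal of the ring of integers 𝒪_K lying above p. Then every nonzero element x ∈ 𝔭 satisfies ‖σ(x)‖ ≥ √n · p^{1/n}, i.e., Σ_{i=1}^n |σ_i(x)|² ≥ n · p^{2/n}. -/
/-!
Since `𝔭` lies over `p`, its absolute norm is a positive power of `p`, and it divides the norm of
every `x ∈ 𝔭`; so `p ≤ |N(x)| = ∏ᵢ |σᵢ(x)|` for `x ≠ 0`. AM-GM applied to the `n` numbers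
`|σᵢ(x)|²` gives `∑ᵢ |σᵢ(x)|² ≥ n · |N(x)|^{2/n} ≥ n · p^{2/n}`.
-/

open NumberField Module

theorem Real.card_mul_prod_rpow_inv_card_le_sum {ι : Type*} [Fintype ι] [Nonempty ι]
    (z : ι → ℝ) (hz : ∀ i, 0 ≤ z i) :
    (Fintype.card ι : ℝ) * (∏ i, z i) ^ (Fintype.card ι : ℝ)⁻¹ ≤ ∑ i, z i := by
  have hcard : (0 : ℝ) < Fintype.card ι := by exact_mod_cast Fintype.card_pos
  have amgm := Real.geom_mean_le_arith_mean Finset.univ (fun _ => 1) z (fun _ _ => zero_le_one)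
    (by simpa using hcard) (fun i _ => hz i)
  simp only [Real.rpow_one, Finset.sum_const, Finset.card_univ, nsmul_eq_mul, mul_one,
    one_mul] at amgm
  rwa [le_div_iff₀ hcard, mul_comm] at amgm

section

variable {R : Type*} [CommRing R] [IsDedekindDomain R] [Module.Free ℤ R] [Module.Finite ℤ R]
  {p : ℕ} (P : Ideal R) [P.IsPrime] [P.LiesOver (Ideal.span {(p : ℤ)})]

theorem Ideal.dvd_absNorm_of_liesOver (hp : p.Prime) : p ∣ Ideal.absNorm P := by
  rw [Ideal.absNorm_eq_pow_inertiaDeg' P hp]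
  exact dvd_pow_self p (Ideal.inertiaDeg'_pos' _ P).ne'

theorem Ideal.le_natAbs_norm_of_mem_of_liesOver (hp : p.Prime) {x : R} (hxP : x ∈ P)
    (hx0 : x ≠ 0) : p ≤ (Algebra.norm ℤ x).natAbs := by
  have hdvd : (p : ℤ) ∣ Algebra.norm ℤ x :=
    (Int.natCast_dvd_natCast.mpr (Ideal.dvd_absNorm_of_liesOver P hp)).trans
      (Ideal.absNorm_dvd_norm_of_mem hxP)
  exact Nat.le_of_dvd (Int.natAbs_pos.mpr (Algebra.norm_ne_zero_iff.mpr hx0))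
    (Int.ofNat_dvd_left.mp hdvd)

end

theorem NumberField.prod_norm_embeddings_eq_abs_norm {K : Type*} [Field K] [NumberField K]
    (y : K) : ∏ σ : K →+* ℂ, ‖σ y‖ = |(Algebra.norm ℚ y : ℝ)| := by
  have h := congr_arg (‖·‖) (Algebra.norm_eq_prod_embeddings ℚ ℂ y)
  rw [norm_prod] at h
  rw [Fintype.prod_equiv (RingHom.equivRatAlgHom K ℂ) (fun σ : K →+* ℂ => ‖σ y‖)
      (fun φ : K →ₐ[ℚ] ℂ => ‖φ y‖)
      (fun σ => by simp [RingHom.equivRatAlgHom_apply]), ← h, eq_ratCast,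
    ← Complex.ofReal_ratCast, Complex.norm_real, Real.norm_eq_abs]

theorem norm_lower_bound_of_mem_prime_ideal_general
    (K : Type*) [Field K] [NumberField K]
    (p : ℕ) (hp : p.Prime)
    (P : Ideal (𝓞 K)) (hP : P.IsPrime)
    -- `𝔭` lies above `p` : `𝔭 ∩ ℤ = pℤ`
    (habove : Ideal.comap (algebraMap ℤ (𝓞 K)) P = Ideal.span {(p : ℤ)}) :
    ∀ x ∈ P, x ≠ 0 →
      (finrank ℚ K : ℝ) * (p : ℝ) ^ ((2 : ℝ) / finrank ℚ K) ≤
        ∑ σ : K →+* ℂ, ‖σ (algebraMap (𝓞 K) K x)‖ ^ 2 := by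
  intro x hxP hx0
  have : P.LiesOver (Ideal.span {(p : ℤ)}) := ⟨habove.symm⟩
  have hpN : (p : ℝ) ≤ |(Algebra.norm ℚ (x : K) : ℝ)| := by
    rw [← Algebra.coe_norm_int, Rat.cast_intCast, ← Int.cast_abs, Int.abs_eq_natAbs]
    exact_mod_cast Ideal.le_natAbs_norm_of_mem_of_liesOver P hp hxP hx0
  have amgm := Real.card_mul_prod_rpow_inv_card_le_sum (fun σ : K →+* ℂ => ‖σ x‖ ^ 2)
    (fun _ => by positivity)
  rw [Embeddings.card, Finset.prod_pow, prod_norm_embeddings_eq_abs_norm,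
    ← Real.rpow_natCast, ← Real.rpow_mul (abs_nonneg _)] at amgm
  refine le_trans ?_ amgm
  rw [Nat.cast_ofNat, ← div_eq_mul_inv]
  gcongr

theorem norm_lower_bound_of_mem_prime_ideal
    (K : Type*) [Field K] [NumberField K]
    (p : ℕ) (hp : p.Prime)
    (P : Ideal (𝓞 K)) (hP : P.IsPrime) (hP0 : P ≠ ⊥)
    -- `𝔭` lies above `p` : `𝔭 ∩ ℤ = pℤ`
    (habove : Ideal.comap (algebraMap ℤ (𝓞 K)) P = Ideal.span {(p : ℤ)}) :
    ∀ x ∈ P, x ≠ 0 →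
      (finrank ℚ K : ℝ) * (p : ℝ) ^ ((2 : ℝ) / finrank ℚ K) ≤
        ∑ σ : K →+* ℂ, ‖σ (algebraMap (𝓞 K) K x)‖ ^ 2 :=
  norm_lower_bound_of_mem_prime_ideal_general K p hp P hP habove
end

section
/- Let R be a finite ring, n ≥ 1 and 1 ≤ k ≤ n integers, and let 𝒞 be the (assumed nonempty) set of all free rank-k R-submodules of R^n. Then for every function g : R^n → ℝ≥0, the average over C ∈ 𝒞 of g*(C) = Σ_{c ∈ C ∩ (R^n)*} g(c) satisfies E[g*(C)] ≤ (|R|^k / |(R^n)*|) · Σ_{v ∈ (R^n)*} g(v), where the expectation is with respect to the uniform distribution on 𝒞. -/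
noncomputable section

namespace AvgFreeCodes

variable (R : Type*) [Ring R]

def autLin {n : ℕ} (w : Fin n → R) (i : Fin n) : (Fin n → R) →ₗ[R] (Fin n → R) where
  toFun x := x + (x i) • w
  map_add' x y := by simp only [Pi.add_apply, add_smul]; abel
  map_smul' r x := by simp only [Pi.smul_apply, smul_eq_mul, RingHom.id_apply, smul_add, mul_smul]

theorem autLin_apply {n : ℕ} (w : Fin n → R) (i : Fin n) (x : Fin n → R) :
    autLin R w i x = x + (x i) • w := rfl

def autOf {n : ℕ} (v : Fin n → R) (i : Fin n) (u : Rˣ) (hu : (u : R) = v i) :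
    (Fin n → R) ≃ₗ[R] (Fin n → R) := by
  refine LinearEquiv.ofLinear (autLin R (v - Pi.single i 1) i)
    (LinearMap.id - (autLin R ((↑u⁻¹ : R) • (v - Pi.single i 1)) i - LinearMap.id)) ?_ ?_ <;>
  · ext y j
    simp only [LinearMap.comp_apply, LinearMap.sub_apply, LinearMap.id_apply, autLin_apply,
      Pi.add_apply, Pi.sub_apply, Pi.smul_apply, smul_eq_mul, smul_smul, Module.End.one_apply,
      Pi.single_apply, ← hu, mul_sub, mul_add, sub_mul, add_mul, mul_one, mul_assoc,
      Units.mul_inv_cancel_left, Units.inv_mul_cancel_left]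
    by_cases hj : j = i <;> simp [hj, ← hu, mul_sub, sub_mul, mul_assoc,
      Units.mul_inv_cancel_left, Units.inv_mul_cancel_left]

theorem autOf_apply_single {n : ℕ} (v : Fin n → R) (i : Fin n) (u : Rˣ) (hu : (u : R) = v i) :
    autOf R v i u hu (Pi.single i 1) = v := by
  show Pi.single i 1 + (Pi.single i 1 : Fin n → R) i • (v - Pi.single i 1) = v
  simp

def permLin {n : ℕ} (e : Fin n ≃ Fin n) : (Fin n → R) ≃ₗ[R] (Fin n → R) where
  toFun x := x ∘ e
  invFun x := x ∘ e.symm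
  map_add' x y := rfl
  map_smul' r x := rfl
  left_inv x := by ext j; simp
  right_inv x := by ext j; simp

theorem permLin_single {n : ℕ} (i j : Fin n) :
    permLin R (Equiv.swap i j) (Pi.single i (1:R)) = Pi.single j 1 := by
  ext a
  simp only [permLin, LinearEquiv.coe_mk, Equiv.coe_fn_mk, Function.comp_apply, Pi.single_apply]
  rcases eq_or_ne a j with rfl | ha
  · simp
  · have : Equiv.swap i j a ≠ i := by
      intro h
      exact ha (by simpa using congrArg (Equiv.swap i j) h)
    simp [this, ha]

theorem exists_linequiv {n : ℕ} (v w : Fin n → R) (hv : ∃ i, IsUnit (v i))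
    (hw : ∃ j, IsUnit (w j)) :
    ∃ f : (Fin n → R) ≃ₗ[R] (Fin n → R), f v = w := by
  obtain ⟨i, hi⟩ := hv
  obtain ⟨ui, hui⟩ := hi
  obtain ⟨j, hj⟩ := hw
  obtain ⟨uj, huj⟩ := hj
  refine ⟨((autOf R v i ui hui).symm.trans (permLin R (Equiv.swap i j))).trans
    (autOf R w j uj huj), ?_⟩
  simp only [LinearEquiv.trans_apply]
  rw [show (autOf R v i ui hui).symm v = Pi.single i 1 from
      (LinearEquiv.symm_apply_eq _).mpr (autOf_apply_single R v i ui hui).symm,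
    permLin_single, autOf_apply_single]

theorem card_contains_eq {n k : ℕ} (v w : Fin n → R)
    (f : (Fin n → R) ≃ₗ[R] (Fin n → R)) (hf : f v = w) :
    Nat.card {C : {C : Submodule R (Fin n → R) // Nonempty (C ≃ₗ[R] (Fin k → R))} // v ∈ C.1} =
    Nat.card {C : {C : Submodule R (Fin n → R) // Nonempty (C ≃ₗ[R] (Fin k → R))} // w ∈ C.1} := by
  have key : ∀ x : Fin n → R,
      Nat.card {C : {C : Submodule R (Fin n → R) // Nonempty (C ≃ₗ[R] (Fin k → R))} // x ∈ C.1} =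
      Nat.card {C : Submodule R (Fin n → R) // Nonempty (C ≃ₗ[R] (Fin k → R)) ∧ x ∈ C} :=
    fun x => Nat.card_congr (Equiv.subtypeSubtypeEquivSubtypeInter
      (fun C : Submodule R (Fin n → R) => Nonempty (C ≃ₗ[R] (Fin k → R))) (fun C => x ∈ C))
  rw [key, key]
  refine Nat.card_congr (Equiv.subtypeEquiv (Submodule.orderIsoMapComap f).toEquiv fun C => ?_)
  simp only [RelIso.coe_fn_toEquiv, Submodule.orderIsoMapComap_apply]
  constructor
  · rintro ⟨⟨e⟩, hv⟩
    exact ⟨⟨(f.submoduleMap C).symm.trans e⟩, hf ▸ Submodule.mem_map_of_mem hv⟩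
  · rintro ⟨⟨e⟩, hw⟩
    refine ⟨⟨(f.submoduleMap C).trans e⟩, ?_⟩
    have : w ∈ Submodule.map (f : (Fin n → R) →ₗ[R] (Fin n → R)) C := hw
    rw [Submodule.mem_map] at this
    obtain ⟨y, hy, hyv⟩ := this
    have : y = v := f.injective (by rw [hf]; exact hyv)
    exact this ▸ hy

end AvgFreeCodes

open AvgFreeCodes in
theorem average_over_free_codes_le
    (R : Type*) [Ring R] [Finite R] (n k : ℕ) (hn : 1 ≤ n) (hk1 : 1 ≤ k) (hkn : k ≤ n)
    (hne : Nonempty {C : Submodule R (Fin n → R) // Nonempty (C ≃ₗ[R] (Fin k → R))})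
    (g : (Fin n → R) → ℝ) (hg : ∀ v, 0 ≤ g v) :
    (∑ᶠ C : {C : Submodule R (Fin n → R) // Nonempty (C ≃ₗ[R] (Fin k → R))},
        ∑ᶠ c : {c : Fin n → R // c ∈ C.1 ∧ ∃ i, IsUnit (c i)}, g c) /
      (Nat.card {C : Submodule R (Fin n → R) // Nonempty (C ≃ₗ[R] (Fin k → R))} : ℝ) ≤
    ((Nat.card R : ℝ) ^ k / (Nat.card {v : Fin n → R // ∃ i, IsUnit (v i)} : ℝ)) *
      ∑ᶠ v : {v : Fin n → R // ∃ i, IsUnit (v i)}, g v := by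
  classical
  haveI : Fintype {C : Submodule R (Fin n → R) // Nonempty (C ≃ₗ[R] (Fin k → R))} :=
    Fintype.ofFinite _
  haveI : Fintype {v : Fin n → R // ∃ i, IsUnit (v i)} := Fintype.ofFinite _
  set ι := {C : Submodule R (Fin n → R) // Nonempty (C ≃ₗ[R] (Fin k → R))} with hι
  set U := {v : Fin n → R // ∃ i, IsUnit (v i)} with hU
  set i0 : Fin n := ⟨0, hn⟩ with hi0
  have hu0 : ∃ i, IsUnit ((Pi.single i0 1 : Fin n → R) i) := ⟨i0, by simp⟩
  set u0 : U := ⟨Pi.single i0 1, hu0⟩ with hu0def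
  -- counting function
  set Nc : (Fin n → R) → ℕ := fun x => Nat.card {C : ι // x ∈ C.1} with hNc
  have hconst : ∀ u : U, Nc u.1 = Nc u0.1 := by
    intro u
    obtain ⟨f, hf⟩ := exists_linequiv R u.1 u0.1 u.2 u0.2
    exact card_contains_eq R u.1 u0.1 f hf
  -- rewrite inner finsums
  have inner : ∀ C : ι, (∑ᶠ c : {c : Fin n → R // c ∈ C.1 ∧ ∃ i, IsUnit (c i)}, g c)
      = ∑ u : U, if u.1 ∈ C.1 then g u.1 else 0 := by
    intro C
    haveI : Fintype {c : Fin n → R // c ∈ C.1 ∧ ∃ i, IsUnit (c i)} := Fintype.ofFinite _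
    rw [finsum_eq_sum_of_fintype, ← Finset.sum_filter,
      Finset.sum_subtype (Finset.univ.filter (fun u : U => u.1 ∈ C.1))
        (p := fun u : U => u.1 ∈ C.1) (fun u => by simp) (fun u => g u.1)]
    exact Fintype.sum_equiv
      ⟨fun c => ⟨⟨c.1, c.2.2⟩, c.2.1⟩, fun u => ⟨u.1.1, u.2, u.1.2⟩,
        fun c => rfl, fun u => rfl⟩ _ _ (fun x => rfl)
  rw [finsum_eq_sum_of_fintype, finsum_eq_sum_of_fintype]
  have hS : (∑ C : ι, ∑ᶠ c : {c : Fin n → R // c ∈ C.1 ∧ ∃ i, IsUnit (c i)}, g c)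
      = (Nc u0.1 : ℝ) * ∑ u : U, g u.1 := by
    calc ∑ C : ι, (∑ᶠ c : {c : Fin n → R // c ∈ C.1 ∧ ∃ i, IsUnit (c i)}, g c)
        = ∑ C : ι, ∑ u : U, if u.1 ∈ C.1 then g u.1 else 0 :=
          Finset.sum_congr rfl (fun C _ => inner C)
      _ = ∑ u : U, ∑ C : ι, if u.1 ∈ C.1 then g u.1 else 0 := Finset.sum_comm
      _ = ∑ u : U, (Nc u.1 : ℝ) * g u.1 := by
          refine Finset.sum_congr rfl fun u _ => ?_
          rw [← Finset.sum_filter, Finset.sum_const]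
          have hcard : Nc u.1 = (Finset.univ.filter (fun C : ι => u.1 ∈ C.1)).card := by
            rw [hNc]
            simp only [Nat.card_eq_fintype_card, Fintype.card_subtype]
          rw [hcard, nsmul_eq_mul]
      _ = ∑ u : U, (Nc u0.1 : ℝ) * g u.1 := Finset.sum_congr rfl (fun u _ => by rw [hconst u])
      _ = (Nc u0.1 : ℝ) * ∑ u : U, g u.1 := (Finset.mul_sum _ _ _).symm
  rw [hS]
  -- counting bound
  have h3 : ∀ C : ι, Nat.card {u : U // u.1 ∈ C.1} ≤ Nat.card R ^ k := by
    intro C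
    have hinj : Function.Injective (fun x : {u : U // u.1 ∈ C.1} => (⟨x.1.1, x.2⟩ : C.1)) := by
      intro a b h
      have h' : (⟨a.1.1, a.2⟩ : C.1) = ⟨b.1.1, b.2⟩ := h
      have : a.1.1 = b.1.1 := Subtype.mk_eq_mk.mp h'
      exact Subtype.ext (Subtype.ext this)
    have := Nat.card_le_card_of_injective _ hinj
    refine this.trans (le_of_eq ?_)
    obtain ⟨e⟩ := C.2
    rw [Nat.card_congr e.toEquiv, Nat.card_fun]
    simp
  have hnat : Nat.card U * Nc u0.1 ≤ Nat.card ι * Nat.card R ^ k := by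
    have h1 : ∑ u : U, Nc u.1 = Nat.card U * Nc u0.1 := by
      rw [Nat.card_eq_fintype_card, ← Finset.card_univ, ← smul_eq_mul, ← Finset.sum_const]
      exact Finset.sum_congr rfl fun u _ => hconst u
    have h2 : ∑ u : U, Nc u.1 = ∑ C : ι, Fintype.card {u : U // u.1 ∈ C.1} := by
      have : ∀ u : U, Nc u.1 = ∑ C : ι, if u.1 ∈ C.1 then 1 else 0 := by
        intro u
        rw [hNc]
        simp only [Nat.card_eq_fintype_card, Fintype.card_subtype, Finset.card_filter]
      simp_rw [this]
      rw [Finset.sum_comm]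
      refine Finset.sum_congr rfl fun C _ => ?_
      rw [Fintype.card_subtype, Finset.card_filter]
    have h4 : ∑ C : ι, Fintype.card {u : U // u.1 ∈ C.1} ≤ Nat.card ι * Nat.card R ^ k := by
      rw [Nat.card_eq_fintype_card, ← Finset.card_univ, ← smul_eq_mul, ← Finset.sum_const]
      refine Finset.sum_le_sum fun C _ => ?_
      rw [← Nat.card_eq_fintype_card]
      exact h3 C
    omega
  -- final arithmetic
  have hι1 : 0 < (Nat.card ι : ℝ) := by
    have : 0 < Nat.card ι := Nat.card_pos
    exact_mod_cast this
  haveI : Nonempty U := ⟨u0⟩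
  have hU1 : 0 < (Nat.card U : ℝ) := by
    have : 0 < Nat.card U := Nat.card_pos
    exact_mod_cast this
  have hT : 0 ≤ ∑ u : U, g u.1 := Finset.sum_nonneg fun u _ => hg u.1
  have hkey : (Nc u0.1 : ℝ) * Nat.card U ≤ Nat.card ι * (Nat.card R : ℝ) ^ k := by
    have := (Nat.cast_le (α := ℝ)).mpr hnat
    push_cast at this
    linarith
  have hdiv : (Nc u0.1 : ℝ) / Nat.card ι ≤ (Nat.card R : ℝ) ^ k / Nat.card U := by
    rw [div_le_div_iff₀ hι1 hU1]
    linarith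
  calc (Nc u0.1 : ℝ) * (∑ u : U, g u.1) / Nat.card ι
      = ((Nc u0.1 : ℝ) / Nat.card ι) * ∑ u : U, g u.1 := by ring
    _ ≤ ((Nat.card R : ℝ) ^ k / Nat.card U) * ∑ u : U, g u.1 :=
        mul_le_mul_of_nonneg_right hdiv hT
end
end

section
/- Let R be a finite ring, n ≥ 1 and 1 ≤ k ≤ n integers, and let 𝒞 be the set of all free rank-k R-submodules of R^n. Then 𝒞 is balanced: there exists an integer L such that every vector y ∈ (R^n)* is contained in exactly L members of 𝒞. -/
/-!
Linear automorphisms of `R^n` permute the free rank-`k` submodules and preserve membership, so the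
number of them through `y` depends only on the orbit of `y`. The vectors with a unit coordinate
form a single orbit: if `y j` is a unit, the dilatransvection `x ↦ x + x j • (y - e j)` sends
`e j` to `y`, and coordinate swaps move `e i` to `e j`.
-/

section Transport

variable {R M M' N : Type*} [Semiring R] [AddCommMonoid M] [Module R M]
  [AddCommMonoid M'] [Module R M'] [AddCommMonoid N] [Module R N]

theorem natCard_submodules_containing_linearEquiv_apply (g : M ≃ₗ[R] M') (x : M) :
    Nat.card {C : Submodule R M' // Nonempty (C ≃ₗ[R] N) ∧ g x ∈ C} =
      Nat.card {C : Submodule R M // Nonempty (C ≃ₗ[R] N) ∧ x ∈ C} := by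
  refine Nat.card_congr (Equiv.subtypeEquiv (Submodule.orderIsoMapComap g.symm).toEquiv
    fun C => ?_)
  change _ ↔ Nonempty ((C.map (g.symm : M' →ₗ[R] M)) ≃ₗ[R] N) ∧ x ∈ C.map (g.symm : M' →ₗ[R] M)
  rw [Submodule.mem_map_equiv, LinearEquiv.symm_symm]
  exact and_congr_left' ⟨fun ⟨e⟩ => ⟨(g.symm.submoduleMap C).symm.trans e⟩,
    fun ⟨e⟩ => ⟨(g.symm.submoduleMap C).trans e⟩⟩

end Transport

section Transitivity

variable {R ι : Type*} [Ring R] [DecidableEq ι]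

theorem exists_linearEquiv_single_one_eq {y : ι → R} {j : ι} (hy : IsUnit (y j)) :
    ∃ g : (ι → R) ≃ₗ[R] (ι → R), g (Pi.single j 1) = y := by
  have hunit :
      IsUnit (1 + LinearMap.proj (R := R) (φ := fun _ : ι => R) j (y - Pi.single j 1)) := by
    simpa using hy
  refine ⟨LinearEquiv.dilatransvection hunit, ?_⟩
  simp [LinearEquiv.dilatransvection.apply]

theorem exists_linearEquiv_apply_eq_of_isUnit {y y' : ι → R} (hy : ∃ i, IsUnit (y i))
    (hy' : ∃ j, IsUnit (y' j)) : ∃ g : (ι → R) ≃ₗ[R] (ι → R), g y = y' := by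
  obtain ⟨i, hi⟩ := hy
  obtain ⟨j, hj⟩ := hy'
  obtain ⟨g, hg⟩ := exists_linearEquiv_single_one_eq hi
  obtain ⟨g', hg'⟩ := exists_linearEquiv_single_one_eq hj
  have hswap :
      LinearEquiv.funCongrLeft R R (Equiv.swap i j) (Pi.single i 1) = Pi.single j 1 := by
    simp [LinearEquiv.funCongrLeft_apply, LinearMap.funLeft, Pi.single_comp_equiv]
  refine ⟨g.symm.trans ((LinearEquiv.funCongrLeft R R (Equiv.swap i j)).trans g'), ?_⟩
  simp [← hg, hswap, hg']

end Transitivity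

theorem free_codes_form_balanced_set_general
    (R : Type*) [Ring R] (n k : ℕ) :
    ∃ L : ℕ, ∀ y : Fin n → R, (∃ i, IsUnit (y i)) →
      Nat.card {C : Submodule R (Fin n → R) //
        Nonempty (C ≃ₗ[R] (Fin k → R)) ∧ y ∈ C} = L := by
  by_cases hex : ∃ y₀ : Fin n → R, ∃ i, IsUnit (y₀ i)
  · obtain ⟨y₀, hy₀⟩ := hex
    refine ⟨Nat.card {C : Submodule R (Fin n → R) //
      Nonempty (C ≃ₗ[R] (Fin k → R)) ∧ y₀ ∈ C}, fun y hy => ?_⟩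
    obtain ⟨g, rfl⟩ := exists_linearEquiv_apply_eq_of_isUnit hy₀ hy
    exact natCard_submodules_containing_linearEquiv_apply g y₀
  · exact ⟨0, fun y hy => (hex ⟨y, hy⟩).elim⟩

theorem free_codes_form_balanced_set
    (R : Type*) [Ring R] [Finite R] (n k : ℕ) (hn : 1 ≤ n) (hk1 : 1 ≤ k) (hkn : k ≤ n) :
    ∃ L : ℕ, ∀ y : Fin n → R, (∃ i, IsUnit (y i)) →
      Nat.card {C : Submodule R (Fin n → R) //
        Nonempty (C ≃ₗ[R] (Fin k → R)) ∧ y ∈ C} = L :=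
  free_codes_form_balanced_set_general R n k
end

section
/- Let R be a finite ring and n ≥ 1. For every vector y ∈ (R^n)*, there exists an R-linear automorphism T of R^n such that T(y) = e₁ = (1, 0, …, 0). -/
noncomputable section

theorem exists_linear_automorphism_sending_unit_vector_to_e1
    (R : Type*) [Ring R] [Finite R] (n : ℕ) (hn : 0 < n)
    (y : Fin n → R) (hy : ∃ i, IsUnit (y i)) :
    ∃ T : (Fin n → R) ≃ₗ[R] (Fin n → R), T y = Pi.single (⟨0, hn⟩ : Fin n) 1 := by
  classical
  obtain ⟨i, hi⟩ := hy
  set z0 : Fin n := ⟨0, hn⟩ with hz0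
  set u : Rˣ := hi.unit with hu
  have hui : (u : R) = y i := hi.unit_spec
  -- T1 : swap coordinates z0 and i
  let f1 : (Fin n → R) →ₗ[R] (Fin n → R) :=
    { toFun := fun x k => x (Equiv.swap z0 i k)
      map_add' := fun x y => rfl
      map_smul' := fun r x => rfl }
  have hswap : ∀ x : Fin n → R, f1 (f1 x) = x := by
    intro x; funext k; simp [f1]
  let T1 : (Fin n → R) ≃ₗ[R] (Fin n → R) :=
    LinearEquiv.ofLinear f1 f1 (LinearMap.ext hswap) (LinearMap.ext hswap)
  -- T2 : scale coordinate z0 on the right by u⁻¹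
  let f2 : (Fin n → R) →ₗ[R] (Fin n → R) :=
    { toFun := fun x k => if k = z0 then x k * (↑u⁻¹ : R) else x k
      map_add' := by intro x y; funext k; by_cases h : k = z0 <;> simp [h, add_mul]
      map_smul' := by intro r x; funext k; by_cases h : k = z0 <;> simp [h, mul_assoc] }
  let g2 : (Fin n → R) →ₗ[R] (Fin n → R) :=
    { toFun := fun x k => if k = z0 then x k * (↑u : R) else x k
      map_add' := by intro x y; funext k; by_cases h : k = z0 <;> simp [h, add_mul]
      map_smul' := by intro r x; funext k; by_cases h : k = z0 <;> simp [h, mul_assoc] }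
  have h2a : f2.comp g2 = LinearMap.id := by
    apply LinearMap.ext; intro x; funext k
    by_cases h : k = z0 <;> simp [f2, g2, h, mul_assoc]
  have h2b : g2.comp f2 = LinearMap.id := by
    apply LinearMap.ext; intro x; funext k
    by_cases h : k = z0 <;> simp [f2, g2, h, mul_assoc]
  let T2 : (Fin n → R) ≃ₗ[R] (Fin n → R) := LinearEquiv.ofLinear f2 g2 h2a h2b
  -- the intermediate vector
  set zv : Fin n → R := T2 (T1 y) with hzv
  have hzv0 : zv z0 = 1 := by
    simp [hzv, T2, T1, f2, f1, Equiv.swap_apply_left, ← hui]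
  -- T3 : elimination
  let f3 : (Fin n → R) →ₗ[R] (Fin n → R) :=
    { toFun := fun x k => if k = z0 then x k else x k - x z0 * zv k
      map_add' := by intro x y; funext k; by_cases h : k = z0 <;> simp [h, add_mul] <;> abel
      map_smul' := by intro r x; funext k; by_cases h : k = z0 <;> simp [h, mul_assoc, mul_sub] }
  let g3 : (Fin n → R) →ₗ[R] (Fin n → R) :=
    { toFun := fun x k => if k = z0 then x k else x k + x z0 * zv k
      map_add' := by intro x y; funext k; by_cases h : k = z0 <;> simp [h, add_mul] <;> abel
      map_smul' := by intro r x; funext k; by_cases h : k = z0 <;> simp [h, mul_assoc, mul_add] }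
  have h3a : f3.comp g3 = LinearMap.id := by
    apply LinearMap.ext; intro x; funext k
    by_cases h : k = z0 <;> simp [f3, g3, h]
  have h3b : g3.comp f3 = LinearMap.id := by
    apply LinearMap.ext; intro x; funext k
    by_cases h : k = z0 <;> simp [f3, g3, h]
  let T3 : (Fin n → R) ≃ₗ[R] (Fin n → R) := LinearEquiv.ofLinear f3 g3 h3a h3b
  refine ⟨T1 ≪≫ₗ T2 ≪≫ₗ T3, ?_⟩
  have : T3 zv = Pi.single z0 1 := by
    funext k
    by_cases h : k = z0
    · simp [T3, f3, h, hzv0, Pi.single_apply]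
    · simp [T3, f3, h, hzv0, Pi.single_apply]
  simpa [hzv] using this
end
end

section
/- Let Λ be a lattice of rank n in ℝ^n, let 𝒫 be a measurable fundamental region for Λ, and let l₀ = sup_{x ∈ 𝒫} ‖x‖ < ∞. Then for every r > l₀, (r - l₀)^n · V_n ≤ V(Λ) · #(Λ ∩ B̄_r) ≤ (r + l₀)^n · V_n, where B̄_r is the closed ball of radius r centered at the origin, V_n is the volume of the unit ball in ℝ^n, and #(Λ ∩ B̄_r) is the number of lattice points in B̄_r. -/
/-! The translates `x + P`, `x ∈ Λ ∩ B̄_r`, are pairwise disjoint, so their union has volume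
`V(Λ) · #(Λ ∩ B̄_r)`. As `P ⊆ B̄_{l₀}`, the union lies in `B̄_{r + l₀}`; it contains `B̄_{r - l₀}`,
since a point `y` of that ball lies in `x + P` for a lattice point `x` with
`‖x‖ ≤ ‖y‖ + l₀ ≤ r`. Comparing volumes, with `vol B̄_s = sⁿ V_n`, gives both bounds. -/

open MeasureTheory Pointwise Metric

section FundamentalRegion

variable {E : Type*} [AddCommGroup E] {P : Set E}

theorem isAddFundamentalDomain_of_existsUnique_sub_mem [MeasurableSpace E] {μ : Measure E}
    {L : AddSubgroup E} (hP : NullMeasurableSet P μ) (h : ∀ y : E, ∃! x : L, y - x ∈ P) :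
    IsAddFundamentalDomain L P μ := by
  refine .mk' hP fun y => ?_
  obtain ⟨x, hx, huniq⟩ := h y
  have hvadd : ∀ g : L, g +ᵥ y = y - ↑(-g) := fun g => by
    rw [AddSubgroup.coe_neg, sub_neg_eq_add, add_comm]; rfl
  refine ⟨-x, show -x +ᵥ y ∈ P by rwa [hvadd, neg_neg], fun g (hg : g +ᵥ y ∈ P) => ?_⟩
  rw [hvadd] at hg
  rw [← huniq _ hg, neg_neg]

theorem pairwiseDisjoint_vadd_of_existsUnique_sub_mem {L : AddSubgroup E}
    (h : ∀ y : E, ∃! x : L, y - x ∈ P) : (L : Set E).PairwiseDisjoint (· +ᵥ P) := by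
  intro x hx x' hx' hne
  refine Set.disjoint_left.2 fun z hz hz' => hne ?_
  obtain ⟨p, hp, rfl⟩ := hz
  obtain ⟨p', hp', hpp'⟩ := hz'
  replace hpp' : x' + p' = x + p := hpp'
  have hsub : x + p - ((⟨x, hx⟩ : L) : E) ∈ P := by rwa [add_sub_cancel_left]
  have hsub' : x + p - ((⟨x', hx'⟩ : L) : E) ∈ P := by rwa [← hpp', add_sub_cancel_left]
  exact congrArg Subtype.val ((h _).unique hsub hsub')

end FundamentalRegion

theorem measureReal_add_eq_card_mul {E : Type*} [AddGroup E] [MeasurableSpace E]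
    [MeasurableAdd E] (μ : Measure E) [μ.IsAddLeftInvariant] {S P : Set E} (hS : S.Finite)
    (hd : S.PairwiseDisjoint (· +ᵥ P)) (hP : MeasurableSet P) :
    μ.real (S + P) = Nat.card S * μ.real P := by
  have hμ : μ (S + P) = Nat.card S * μ P := by
    have hunion : S + P = ⋃ x ∈ S, x +ᵥ P := Set.iUnion_add_left_image.symm
    rw [hunion, measure_biUnion hS.countable hd fun x _ => hP.const_vadd x]
    simp only [measure_vadd, ENNReal.tsum_set_const, ← hS.cast_ncard_eq, Nat.card_coe_set_eq,
      ENat.toENNReal_coe]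
  rw [measureReal_def, measureReal_def, hμ, ENNReal.toReal_mul, ENNReal.toReal_natCast]

theorem AddSubgroup.finite_inter_closedBall {E : Type*} [NormedAddCommGroup E] [ProperSpace E]
    (L : AddSubgroup E) [DiscreteTopology L] (x : E) (r : ℝ) :
    ((L : Set E) ∩ closedBall x r).Finite := by
  rw [Set.inter_comm]
  exact finite_isBounded_inter_isClosed DiscreteTopology.isDiscrete isBounded_closedBall
    L.isClosed_of_discrete

theorem closedBall_sub_subset_inter_closedBall_add {E : Type*} [SeminormedAddCommGroup E]
    {L P : Set E} {l : ℝ} (hcover : ∀ y : E, ∃ x ∈ L, y - x ∈ P) (hP : P ⊆ closedBall 0 l)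
    (r : ℝ) : closedBall 0 (r - l) ⊆ (L ∩ closedBall 0 r) + P := by
  intro y hy
  obtain ⟨x, hxL, hyx⟩ := hcover y
  refine ⟨x, ⟨hxL, mem_closedBall_zero_iff.2 ?_⟩, y - x, hyx, add_sub_cancel _ _⟩
  calc ‖x‖ = ‖y - (y - x)‖ := by rw [sub_sub_cancel]
    _ ≤ ‖y‖ + ‖y - x‖ := norm_sub_le _ _
    _ ≤ (r - l) + l := add_le_add (mem_closedBall_zero_iff.1 hy)
        (mem_closedBall_zero_iff.1 (hP hyx))
    _ = r := sub_add_cancel r l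

theorem lattice_point_enumerator_bounds_general
    (n : ℕ)
    (Λ : Submodule ℤ (EuclideanSpace ℝ (Fin n))) [DiscreteTopology Λ] [IsZLattice ℝ Λ]
    (P : Set (EuclideanSpace ℝ (Fin n))) (hmeas : MeasurableSet P)
    -- `P` is a fundamental region: every point has a unique representation `y = x + p`
    (hfund : ∀ y : EuclideanSpace ℝ (Fin n), ∃! x : Λ, y - x ∈ P)
    (l₀ : ℝ) (hl₀ : IsLUB (norm '' P) l₀)
    (r : ℝ) (hr : l₀ < r) :
    (r - l₀) ^ n * (volume (Metric.closedBall (0 : EuclideanSpace ℝ (Fin n)) 1)).toReal ≤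
      ZLattice.covolume Λ volume *
        (Nat.card ↥((Λ : Set (EuclideanSpace ℝ (Fin n))) ∩ Metric.closedBall 0 r) : ℝ) ∧
    ZLattice.covolume Λ volume *
        (Nat.card ↥((Λ : Set (EuclideanSpace ℝ (Fin n))) ∩ Metric.closedBall 0 r) : ℝ) ≤
      (r + l₀) ^ n * (volume (Metric.closedBall (0 : EuclideanSpace ℝ (Fin n)) 1)).toReal := by
  set S := (Λ : Set (EuclideanSpace ℝ (Fin n))) ∩ closedBall 0 r
  have hP : P ⊆ closedBall 0 l₀ := fun p hp =>
    mem_closedBall_zero_iff.2 (hl₀.1 (Set.mem_image_of_mem _ hp))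
  have hl₀_nonneg : 0 ≤ l₀ := by
    obtain ⟨x, hx, -⟩ := hfund 0
    exact (norm_nonneg _).trans (hl₀.1 (Set.mem_image_of_mem _ hx))
  have hcovolume : ZLattice.covolume Λ volume = volume.real P :=
    ZLattice.covolume_eq_measure_fundamentalDomain Λ volume
      (isAddFundamentalDomain_of_existsUnique_sub_mem (L := Λ.toAddSubgroup)
        hmeas.nullMeasurableSet hfund)
  have hunion : volume.real (S + P) = Nat.card S * volume.real P :=
    measureReal_add_eq_card_mul volume (Λ.toAddSubgroup.finite_inter_closedBall 0 r)
      ((pairwiseDisjoint_vadd_of_existsUnique_sub_mem (L := Λ.toAddSubgroup) hfund).subset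
        Set.inter_subset_left) hmeas
  have hupper : S + P ⊆ closedBall 0 (r + l₀) := by
    simpa using (Set.add_subset_add Set.inter_subset_right hP).trans
      (closedBall_add_closedBall (hr.le.trans' hl₀_nonneg) hl₀_nonneg 0 0).subset
  have hball : ∀ s : ℝ, 0 ≤ s → volume.real (closedBall (0 : EuclideanSpace ℝ (Fin n)) s) =
      s ^ n * volume.real (closedBall (0 : EuclideanSpace ℝ (Fin n)) 1) := fun s hs => by
    rw [Measure.addHaar_real_closedBall' _ _ hs, finrank_euclideanSpace_fin]
  simp only [← measureReal_def, hcovolume, mul_comm (volume.real P), ← hunion]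
  constructor
  · rw [← hball _ (sub_nonneg.2 hr.le)]
    exact measureReal_mono (closedBall_sub_subset_inter_closedBall_add
      (fun y => have ⟨x, hx⟩ := (hfund y).exists; ⟨x, x.2, hx⟩) hP r)
      ((measure_mono hupper).trans_lt measure_closedBall_lt_top).ne
  · rw [← hball _ (by linarith)]
    exact measureReal_mono hupper measure_closedBall_lt_top.ne

theorem lattice_point_enumerator_bounds
    (n : ℕ) (hn : 0 < n)
    (Λ : Submodule ℤ (EuclideanSpace ℝ (Fin n))) [DiscreteTopology Λ] [IsZLattice ℝ Λ]
    (P : Set (EuclideanSpace ℝ (Fin n))) (hmeas : MeasurableSet P)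
    -- `P` is a fundamental region: every point has a unique representation `y = x + p`
    (hfund : ∀ y : EuclideanSpace ℝ (Fin n), ∃! x : Λ, y - x ∈ P)
    (l₀ : ℝ) (hl₀ : IsLUB (norm '' P) l₀)
    (r : ℝ) (hr : l₀ < r) :
    (r - l₀) ^ n * (volume (Metric.closedBall (0 : EuclideanSpace ℝ (Fin n)) 1)).toReal ≤
      ZLattice.covolume Λ volume *
        (Nat.card ↥((Λ : Set (EuclideanSpace ℝ (Fin n))) ∩ Metric.closedBall 0 r) : ℝ) ∧
    ZLattice.covolume Λ volume *
        (Nat.card ↥((Λ : Set (EuclideanSpace ℝ (Fin n))) ∩ Metric.closedBall 0 r) : ℝ) ≤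
      (r + l₀) ^ n * (volume (Metric.closedBall (0 : EuclideanSpace ℝ (Fin n)) 1)).toReal :=
  lattice_point_enumerator_bounds_general n Λ P hmeas hfund l₀ hl₀ r hr
end
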